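/- For any linear Lagrangian relation L on V, the composition L⁻¹∘L is idempotent; in fact L⁻¹∘L = E_{V₀} where V₀ = p₁(L) and E_{V₀} = {(v, v+w) : v ∈ V₀, w ∈ V₀^⊥}. -/

import Mathlib

open Module Submodule

variable {V : Type} [AddCommGroup V] [Module ℂ V]

/-- The form `B((v,w),(v',w')) = ⟨v|v'⟩ − ⟨w|w'⟩` on `V × V`. -/
noncomputable def BB (b : LinearMap.BilinForm ℂ V) : LinearMap.BilinForm ℂ (V × V) :=
  LinearMap.mk₂ ℂ (fun p q => b p.1 q.1 - b p.2 q.2)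
    (by intros; simp; ring)
    (by intros; simp; ring)
    (by intros; simp; ring)
    (by intros; simp; ring)

/-- A linear relation `L ⊆ V × V` is isotropic if `B` vanishes on it. -/
def IsIsotropicRel (b : LinearMap.BilinForm ℂ V) (L : Submodule ℂ (V × V)) : Prop :=
  ∀ p ∈ L, ∀ q ∈ L, BB b p q = 0

/-- A linear Lagrangian relation: an isotropic subspace of `V × V` of dimension `dim V`. -/
def IsLagrangianRel [FiniteDimensional ℂ V] (b : LinearMap.BilinForm ℂ V)
    (L : Submodule ℂ (V × V)) : Prop :=
  IsIsotropicRel b L ∧ finrank ℂ L = finrank ℂ V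

/-- Composition of linear relations: `rcomp L L' = L' ∘ L = {(x,z) | ∃ y, (x,y) ∈ L, (y,z) ∈ L'}`. -/
def rcomp (L L' : Submodule ℂ (V × V)) : Submodule ℂ (V × V) where
  carrier := {p | ∃ y, (p.1, y) ∈ L ∧ (y, p.2) ∈ L'}
  add_mem' := fun ⟨y, h1, h2⟩ ⟨y', h1', h2'⟩ => ⟨y + y', L.add_mem h1 h1', L'.add_mem h2 h2'⟩
  zero_mem' := ⟨0, L.zero_mem, L'.zero_mem⟩
  smul_mem' := fun c p ⟨y, h1, h2⟩ => ⟨c • y, L.smul_mem c h1, L'.smul_mem c h2⟩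

/-- The idempotent relation `E_{V₀} = {(v, v+w) : v ∈ V₀, w ∈ V₀^⊥}` of a
coisotropic subspace `V₀`. -/
noncomputable def Esub {V : Type} [AddCommGroup V] [Module ℂ V]
    (b : LinearMap.BilinForm ℂ V) (V₀ : Submodule ℂ V) : Submodule ℂ (V × V) :=
  Submodule.comap (LinearMap.fst ℂ V V) V₀ ⊓
    Submodule.comap (LinearMap.snd ℂ V V - LinearMap.fst ℂ V V) (b.orthogonal V₀)


/-! A Lagrangian relation `L` is its own `B`-orthogonal, so `(w, 0) ∈ L` exactly when `w` is
`b`-orthogonal to `p₁(L)`. On the other hand `(x, z) ∈ L⁻¹ ∘ L` means `(x, y), (z, y) ∈ L` for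
some `y`, i.e. `x ∈ p₁(L)` and `(z - x, 0) = (z, y) - (x, y) ∈ L`. -/

section

variable {b : LinearMap.BilinForm ℂ V} {L : Submodule ℂ (V × V)}

@[simp]
lemma BB_apply (b : LinearMap.BilinForm ℂ V) (p q : V × V) :
    BB b p q = b p.1 q.1 - b p.2 q.2 :=
  rfl

lemma BB_nondegenerate (hb : b.Nondegenerate) : (BB b).Nondegenerate := by
  refine ⟨fun p hp => Prod.ext (hb.1 _ fun v => ?_) (hb.1 _ fun v => ?_),
    fun q hq => Prod.ext (hb.2 _ fun v => ?_) (hb.2 _ fun v => ?_)⟩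
  · simpa using hp (v, 0)
  · simpa using hp (0, v)
  · simpa using hq (v, 0)
  · simpa using hq (0, v)

lemma IsIsotropicRel.le_orthogonal (hL : IsIsotropicRel b L) : L ≤ (BB b).orthogonal L :=
  fun p hp q hq => hL q hq p hp

lemma IsLagrangianRel.orthogonal_eq [FiniteDimensional ℂ V] (hb : b.Nondegenerate)
    (hL : IsLagrangianRel b L) : (BB b).orthogonal L = L := by
  refine (eq_of_le_of_finrank_le hL.1.le_orthogonal ?_).symm
  rw [LinearMap.BilinForm.finrank_orthogonal (BB_nondegenerate hb), hL.2, finrank_prod]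
  omega

lemma mk_zero_mem_orthogonal_iff {w : V} :
    ((w, 0) : V × V) ∈ (BB b).orthogonal L ↔ w ∈ b.orthogonal (L.map (LinearMap.fst ℂ V V)) := by
  simp

lemma IsLagrangianRel.mk_zero_mem_iff [FiniteDimensional ℂ V] (hb : b.Nondegenerate)
    (hL : IsLagrangianRel b L) {w : V} :
    ((w, 0) : V × V) ∈ L ↔ w ∈ b.orthogonal (L.map (LinearMap.fst ℂ V V)) := by
  rw [← mk_zero_mem_orthogonal_iff, hL.orthogonal_eq hb]

lemma mem_Esub_iff {V₀ : Submodule ℂ V} {x z : V} :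
    (x, z) ∈ Esub b V₀ ↔ x ∈ V₀ ∧ z - x ∈ b.orthogonal V₀ :=
  Iff.rfl

end

lemma mem_rcomp_inverse_iff {L : Submodule ℂ (V × V)} {x z : V} :
    (x, z) ∈ rcomp L (L.map (LinearEquiv.prodComm ℂ V V).toLinearMap) ↔
      x ∈ L.map (LinearMap.fst ℂ V V) ∧ ((z - x, 0) : V × V) ∈ L := by
  change (∃ y, (x, y) ∈ L ∧ (y, z) ∈ L.map _) ↔ _
  simp only [Submodule.mem_map_equiv]
  change (∃ y, (x, y) ∈ L ∧ (z, y) ∈ L) ↔ _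
  constructor
  · rintro ⟨y, hxy, hzy⟩
    exact ⟨⟨(x, y), hxy, rfl⟩, by simpa using L.sub_mem hzy hxy⟩
  · rintro ⟨⟨⟨x', y⟩, hxy, rfl⟩, hz⟩
    exact ⟨y, hxy, by simpa using L.add_mem hz hxy⟩

theorem stmt13_general {V : Type} [AddCommGroup V] [Module ℂ V] [FiniteDimensional ℂ V]
    (b : LinearMap.BilinForm ℂ V) (hnd : b.Nondegenerate)
    (L : Submodule ℂ (V × V)) (hL : IsLagrangianRel b L) :
    rcomp L (Submodule.map (LinearEquiv.prodComm ℂ V V).toLinearMap L) =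
      Esub b (Submodule.map (LinearMap.fst ℂ V V) L) := by
  ext ⟨x, z⟩
  rw [mem_rcomp_inverse_iff, mem_Esub_iff, hL.mk_zero_mem_iff hnd]

/-- For any linear Lagrangian relation `L`, the composition `L⁻¹ ∘ L` is idempotent;
in fact `L⁻¹ ∘ L = E_{V₀}` with `V₀ = p₁(L)`. -/
theorem stmt13 {V : Type} [AddCommGroup V] [Module ℂ V] [FiniteDimensional ℂ V]
    (b : LinearMap.BilinForm ℂ V) (hsymm : b.IsSymm) (hnd : b.Nondegenerate)
    (L : Submodule ℂ (V × V)) (hL : IsLagrangianRel b L) :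
    rcomp L (Submodule.map (LinearEquiv.prodComm ℂ V V).toLinearMap L) =
      Esub b (Submodule.map (LinearMap.fst ℂ V V) L) :=
  stmt13_general b hnd L hL
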